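/- arXiv:1707.01010 — 2 statements merged into one kernel-verified Lean document; each statement's English description precedes it below -/
import Mathlib

section
/- Let w be a word of length n over V and a ∈ V. If wa^n is primitive but not ins-robust, then for every letter b ∈ V with b ≠ a, the word wb^n is ins-robust primitive. -/
/-- `wpow v n` is the word `v` repeated `n` times. -/
def wpow {V : Type*} (v : List V) : ℕ → List V
  | 0 => []
  | n + 1 => v ++ wpow v n

/-- A word is primitive if it is nonempty and not a proper power. -/
def Primitive {V : Type*} (w : List V) : Prop :=
  w ≠ [] ∧ ∀ (v : List V) (n : ℕ), w = wpow v n → n = 1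

/-- A word is ins-robust if it is primitive and inserting any letter at any
position yields a primitive word. -/
def InsRobust {V : Type*} (w : List V) : Prop :=
  Primitive w ∧ ∀ (x y : List V) (a : V), w = x ++ y → Primitive (x ++ a :: y)

/-- `HasPeriod w p` : the word `w` is periodic with period `p`. -/
def HasPeriod {V : Type*} (w : List V) (p : ℕ) : Prop :=
  ∀ i, i + p < w.length → w[i]? = w[i + p]?

lemma wpow_length {V : Type*} (v : List V) (k : ℕ) :
    (wpow v k).length = k * v.length := by
  induction k with
  | zero => simp [wpow]
  | succ k ih => simp [wpow, ih]; ring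

lemma wpow_getElem? {V : Type*} (z : List V) (k p : ℕ) (hp : p < k * z.length) :
    (wpow z k)[p]? = z[p % z.length]? := by
  induction k generalizing p with
  | zero => omega
  | succ k ih =>
    show (z ++ wpow z k)[p]? = _
    by_cases h : p < z.length
    · rw [List.getElem?_append_left h, Nat.mod_eq_of_lt h]
    · push_neg at h
      have hb : p - z.length < k * z.length := by
        have := hp; rw [Nat.succ_mul] at this; omega
      rw [List.getElem?_append_right h, ih _ hb, ← Nat.mod_eq_sub_mod h]

lemma wpow_singleton {V : Type*} (a : V) (n : ℕ) :
    wpow [a] n = List.replicate n a := by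
  induction n with
  | zero => rfl
  | succ n ih => simp [wpow, ih, List.replicate_succ]

lemma side {V : Type*} {n : ℕ} {w : List V} {a : V} (hn : 1 ≤ n)
    (hlen : w.length = n) (hw : w ≠ List.replicate n a)
    {x y : List V} {e : V} (hxy : w ++ List.replicate n a = x ++ y)
    {z : List V} {k : ℕ} (hz : x ++ e :: y = wpow z k) (hk : k ≠ 1) :
    ∃ (m i : ℕ) (c : V), c ≠ a ∧ n + 2 + i ≤ 2 * m ∧ 3 * m ≤ 2 * n + 1 ∧
      i + m + 1 ≤ n ∧
      ∀ p < n, w[p]? = some (if p = i ∨ p = i + m then c else a) := by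
  set m := z.length with hm
  have hxylen : x.length + y.length = 2 * n := by
    have := congrArg List.length hxy
    simp [hlen] at this
    omega
  have hkm : k * m = 2 * n + 1 := by
    have := congrArg List.length hz
    rw [wpow_length, ← hm] at this
    simp at this
    omega
  have hm1 : 1 ≤ m := by
    rcases Nat.eq_zero_or_pos m with h | h
    · rw [h, Nat.mul_zero] at hkm; omega
    · exact h
  have hk3 : 3 ≤ k := by
    rcases Nat.lt_or_ge k 3 with h | h
    · interval_cases k <;> omega
    · exact h
  have h3m : 3 * m ≤ 2 * n + 1 := by
    calc 3 * m ≤ k * m := Nat.mul_le_mul_right m hk3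
    _ = 2 * n + 1 := hkm
  have hmn : m ≤ n := by omega
  have hs2n : x.length ≤ 2 * n := by omega
  -- index facts
  have hu_a : ∀ p, n ≤ p → p < 2 * n → (x ++ y)[p]? = some a := by
    intro p h1 h2
    rw [← hxy, List.getElem?_append_right (by omega : w.length ≤ p), hlen,
      List.getElem?_replicate, if_pos (by omega)]
  have hu_w : ∀ p, p < n → (x ++ y)[p]? = w[p]? := by
    intro p hp
    rw [← hxy, List.getElem?_append_left (by omega)]
  have hv : ∀ p, p < 2 * n + 1 → (x ++ e :: y)[p]? = z[p % m]? := by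
    intro p hp
    rw [hz, hm]
    exact wpow_getElem? z k p (by rw [← hm, hkm]; exact hp)
  have hvu_lt : ∀ p, p < x.length → (x ++ e :: y)[p]? = (x ++ y)[p]? := by
    intro p hp
    rw [List.getElem?_append_left hp, List.getElem?_append_left hp]
  have hvu_ge : ∀ p, x.length ≤ p → (x ++ e :: y)[p + 1]? = (x ++ y)[p]? := by
    intro p hp
    rw [List.getElem?_append_right (by omega : x.length ≤ p + 1),
      List.getElem?_append_right hp]
    have h : p + 1 - x.length = (p - x.length) + 1 := by omega
    rw [h, List.getElem?_cons_succ]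
  -- z is not constantly a
  have hzc : ∃ ρ, ρ < m ∧ z[ρ]? ≠ some a := by
    by_contra h
    push_neg at h
    apply hw
    have hww : ∀ p, p < n → w[p]? = some a := by
      intro p hp
      rw [← hu_w p hp]
      by_cases hps : p < x.length
      · rw [← hvu_lt p hps, hv p (by omega)]
        exact h _ (Nat.mod_lt _ hm1)
      · rw [← hvu_ge p (by omega), hv (p + 1) (by omega)]
        exact h _ (Nat.mod_lt _ hm1)
    apply List.ext_getElem?
    intro p
    by_cases hp : p < n
    · rw [hww p hp, List.getElem?_replicate, if_pos hp]
    · rw [List.getElem?_eq_none (by omega : w.length ≤ p),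
        List.getElem?_eq_none (by simp; omega)]
  obtain ⟨i, him, hic⟩ := hzc
  obtain ⟨c, hc⟩ : ∃ c, z[i]? = some c := by
    have : i < z.length := hm ▸ him
    exact ⟨z[i], List.getElem?_eq_getElem this⟩
  have hca : c ≠ a := fun h => hic (by rw [hc, h])
  -- window: positions n+1..2n except x.length give a on residues
  have hwin : ∀ p, n + 1 ≤ p → p ≤ 2 * n → p ≠ x.length → z[p % m]? = some a := by
    intro p h1 h2 hps
    rw [← hv p (by omega)]
    rcases Nat.lt_or_ge p x.length with h | h
    · rw [hvu_lt p h]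
      exact hu_a p (by omega) (by omega)
    · have h' : x.length ≤ p - 1 := by omega
      have hpe : p = (p - 1) + 1 := by omega
      rw [hpe, hvu_ge (p - 1) h']
      exact hu_a (p - 1) (by omega) (by omega)
  -- each residue has a representative in the window
  have hrep : ∀ ρ, ρ < m → ∃ p, n + 1 ≤ p ∧ p ≤ 2 * n ∧ p % m = ρ := by
    intro ρ hρ
    have h1 := Nat.div_add_mod (n + m - ρ) m
    have h2 : (n + m - ρ) % m < m := Nat.mod_lt _ hm1
    exact ⟨ρ + m * ((n + m - ρ) / m), by omega, by omega,
      by rw [Nat.add_mul_mod_self_left, Nat.mod_eq_of_lt hρ]⟩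
  -- x.length is in the window with residue i
  have hswin : n + 1 ≤ x.length ∧ x.length % m = i := by
    obtain ⟨p, h1, h2, h3⟩ := hrep i him
    by_cases hps : p = x.length
    · exact ⟨hps ▸ h1, hps ▸ h3⟩
    · exfalso
      have := hwin p h1 h2 hps
      rw [h3, hc] at this
      exact hca (Option.some.inj this)
  obtain ⟨hs1, hs3⟩ := hswin
  have hsm2 : 2 * n + 1 ≤ x.length + m := by
    by_contra h
    push_neg at h
    have hh := hwin (x.length + m) (by omega) (by omega) (by omega)
    rw [Nat.add_mod_right, hs3, hc] at hh
    exact hca (Option.some.inj hh)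
  have hsml : x.length ≤ n + m := by
    by_contra h
    push_neg at h
    have hh := hwin (x.length - m) (by omega) (by omega) (by omega)
    rw [← Nat.mod_eq_sub_mod (by omega : m ≤ x.length), hs3, hc] at hh
    exact hca (Option.some.inj hh)
  -- x.length = m*(k-1) + i
  have hdm := Nat.div_add_mod x.length m
  rw [hs3] at hdm
  have hmk : m * k = 2 * n + 1 := by rw [Nat.mul_comm]; exact hkm
  have h1 : x.length / m < k := by
    apply Nat.lt_of_mul_lt_mul_left (a := m)
    omega
  have h2 : k < x.length / m + 2 := by
    apply Nat.lt_of_mul_lt_mul_left (a := m)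
    have hexp : m * (x.length / m + 2) = m * (x.length / m) + m * 2 := by ring
    omega
  have hq : x.length / m = k - 1 := by omega
  rw [hq] at hdm
  -- key: m*(k-2) + i ≤ n - 1
  have hexp2 : m * (k - 2) + m = m * (k - 1) := by
    rw [← Nat.mul_succ]
    congr 1
    omega
  have hexp3 : m * (k - 1) + m = m * k := by
    rw [← Nat.mul_succ]
    congr 1
    omega
  have hkey : m * (k - 2) + i + 1 ≤ n := by
    by_contra h
    push_neg at h
    have hq_lt_s : m * (k - 2) + i < x.length := by omega
    have hua := hu_a (m * (k - 2) + i) (by omega) (by omega)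
    have hvv := hvu_lt _ hq_lt_s
    rw [hv _ (by omega), hua] at hvv
    have hmod : (m * (k - 2) + i) % m = i := by
      rw [Nat.mul_add_mod, Nat.mod_eq_of_lt him]
    rw [hmod, hc] at hvv
    exact hca (Option.some.inj hvv)
  have hkey2 : n + 2 + i ≤ 2 * m := by omega
  have hmrange : i + m + 1 ≤ n := by
    have : m * 1 ≤ m * (k - 2) := Nat.mul_le_mul_left m (by omega)
    omega
  refine ⟨m, i, c, hca, hkey2, h3m, hmrange, ?_⟩
  intro p hp
  rw [← hu_w p hp, ← hvu_lt p (by omega), hv p (by omega)]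
  by_cases hpi : p = i
  · rw [if_pos (Or.inl hpi), hpi, Nat.mod_eq_of_lt him]
    exact hc
  by_cases hpim : p = i + m
  · rw [if_pos (Or.inr hpim), hpim, Nat.add_mod_right, Nat.mod_eq_of_lt him]
    exact hc
  rw [if_neg (by tauto)]
  have hres : p % m ≠ i := by
    rcases Nat.lt_or_ge p m with h | h
    · rw [Nat.mod_eq_of_lt h]; exact hpi
    · rw [Nat.mod_eq_sub_mod h, Nat.mod_eq_of_lt (by omega)]
      intro hh
      exact hpim (by omega)
  obtain ⟨p', hp1', hp2', hp3'⟩ := hrep (p % m) (Nat.mod_lt _ hm1)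
  have hps' : p' ≠ x.length := fun hh => hres (by rw [← hp3', hh, hs3])
  rw [← hp3']
  exact hwin p' hp1' hp2' hps'

lemma pow_case {V : Type*} {n : ℕ} {w : List V} {b : V} (hn : 1 ≤ n)
    (hlen : w.length = n) {s : List V} {r : ℕ}
    (h : w ++ List.replicate n b = wpow s r) (hr : r ≠ 1) :
    w = List.replicate n b := by
  have hrm : r * s.length = 2 * n := by
    have := congrArg List.length h
    rw [wpow_length] at this
    simp [hlen] at this
    omega
  have hm1 : 1 ≤ s.length := by
    rcases Nat.eq_zero_or_pos s.length with hh | hh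
    · rw [hh, Nat.mul_zero] at hrm; omega
    · exact hh
  have hr2 : 2 ≤ r := by
    rcases Nat.lt_or_ge r 2 with hh | hh
    · interval_cases r <;> omega
    · exact hh
  have hmn : s.length ≤ n := by
    have : 2 * s.length ≤ r * s.length := Nat.mul_le_mul_right _ hr2
    omega
  have hexp : s.length * (r - 1) + s.length = s.length * r := by
    rw [← Nat.mul_succ]
    congr 1
    omega
  have hmr : s.length * r = 2 * n := by rw [Nat.mul_comm]; exact hrm
  have hb : ∀ p, n ≤ p → p < 2 * n → (w ++ List.replicate n b)[p]? = some b := by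
    intro p h1 h2
    rw [List.getElem?_append_right (by omega : w.length ≤ p), hlen,
      List.getElem?_replicate, if_pos (by omega)]
  have hsall : ∀ ρ, ρ < s.length → s[ρ]? = some b := by
    intro ρ hρ
    have hh := hb (s.length * (r - 1) + ρ) (by omega) (by omega)
    rw [h, wpow_getElem? s r _ (by omega), Nat.mul_add_mod,
      Nat.mod_eq_of_lt hρ] at hh
    exact hh
  have hwall : ∀ p, p < n → w[p]? = some b := by
    intro p hp
    have h0 : (w ++ List.replicate n b)[p]? = w[p]? :=
      List.getElem?_append_left (by omega)
    rw [h, wpow_getElem? s r _ (by omega)] at h0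
    rw [← h0]
    exact hsall _ (Nat.mod_lt _ hm1)
  apply List.ext_getElem?
  intro p
  by_cases hp : p < n
  · rw [hwall p hp, List.getElem?_replicate, if_pos hp]
  · rw [List.getElem?_eq_none (by omega : w.length ≤ p),
      List.getElem?_eq_none (by simp; omega)]

theorem stmt10 {V : Type*} (w : List V) (n : ℕ) (a : V) (hlen : w.length = n)
    (hprim : Primitive (w ++ wpow [a] n)) (hins : ¬ InsRobust (w ++ wpow [a] n)) :
    ∀ b : V, b ≠ a → InsRobust (w ++ wpow [b] n) := by
  rw [wpow_singleton] at hprim hins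
  have hne := hprim.1
  have hn : 1 ≤ n := by
    rcases Nat.eq_zero_or_pos n with h | h
    · exfalso
      apply hne
      subst h
      rw [List.length_eq_zero_iff] at hlen
      simp [hlen]
    · exact h
  have hwa : w ≠ List.replicate n a := by
    intro h
    have heq : w ++ List.replicate n a = wpow [a] (2 * n) := by
      rw [h, wpow_singleton, two_mul, List.replicate_add]
    have := hprim.2 [a] (2 * n) heq
    omega
  rw [InsRobust] at hins
  have hfail : ∃ x y e, w ++ List.replicate n a = x ++ y ∧
      ¬ Primitive (x ++ e :: y) := by
    by_contra h
    push_neg at h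
    exact hins ⟨hprim, fun x y e hxy => h x y e hxy⟩
  obtain ⟨x, y, e, hxy, hnp⟩ := hfail
  have hzk : ∃ z k, x ++ e :: y = wpow z k ∧ k ≠ 1 := by
    by_contra h
    push_neg at h
    exact hnp ⟨by simp, h⟩
  obtain ⟨z, k, hz, hk⟩ := hzk
  obtain ⟨m, i, c, hca, hbd1, hbd2, hbd3, hDa⟩ := side hn hlen hwa hxy hz hk
  have hn4 : 3 * i + 4 ≤ n := by omega
  have hm3 : 3 ≤ m := by omega
  intro b hb
  have hwb : w ≠ List.replicate n b := by
    intro hh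
    have h1 := hDa (i + 1) (by omega)
    rw [if_neg (by omega), hh, List.getElem?_replicate, if_pos (by omega)] at h1
    exact hb (Option.some.inj h1)
  rw [wpow_singleton]
  constructor
  · constructor
    · intro hnil
      have := congrArg List.length hnil
      simp [hlen] at this
      omega
    · intro v r hvr
      by_contra hr
      exact hwb (pow_case hn hlen hvr hr)
  · intro x' y' e' hxy'
    by_contra hnp'
    have hzk' : ∃ z' k', x' ++ e' :: y' = wpow z' k' ∧ k' ≠ 1 := by
      by_contra h
      push_neg at h
      exact hnp' ⟨by simp, h⟩
    obtain ⟨z', k', hz', hk'⟩ := hzk'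
    obtain ⟨m', j, d, hdb, hbd1', hbd2', hbd3', hDb⟩ := side hn hlen hwb hxy' hz' hk'
    have hn4' : 3 * j + 4 ≤ n := by omega
    have hm3' : 3 ≤ m' := by omega
    rcases eq_or_ne (i + 1) j with hij | hij
    · have h1 := hDa (i + 2) (by omega)
      have h2 := hDb (i + 2) (by omega)
      rw [if_neg (by omega)] at h1
      rw [if_neg (by omega)] at h2
      rw [h1] at h2
      exact hb (Option.some.inj h2).symm
    · have h1 := hDa (i + 1) (by omega)
      have h2 := hDb (i + 1) (by omega)
      rw [if_neg (by omega)] at h1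
      rw [if_neg (by omega)] at h2
      rw [h1] at h2
      exact hb (Option.some.inj h2).symm
end

section
/- A primitive word u is not ins-robust if and only if uu contains a factor of length |u| that is periodic with some period p such that p divides |u| + 1 and p ≤ |u|. -/
/-!
Inserting `a` into `u = x ++ y` gives a proper power exactly when `x ++ a :: y` has a period
`p < |u| + 1` dividing `|u| + 1`. A word with a period dividing its length is a power of its
prefix of that length, so the period passes to all its conjugates; hence `x ++ a :: y` has
period `p` iff `y ++ x ++ [a]` does, i.e. iff the factor `y ++ x` of `u ++ u` has period `p`
and `a` is the letter that continues it. Every factor of `u ++ u` of length `|u|` is such a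
conjugate `y ++ x`, and a word with period `p` can always be continued by one letter.
-/

section Wpow

variable {V : Type*}

theorem length_wpow (v : List V) (n : ℕ) : (wpow v n).length = n * v.length := by
  induction n with
  | zero => simp [wpow]
  | succ n ih => simp only [wpow, List.length_append, ih, Nat.succ_mul]; omega

theorem wpow_add (v : List V) (m n : ℕ) : wpow v (m + n) = wpow v m ++ wpow v n := by
  induction m with
  | zero => simp [wpow]
  | succ m ih => rw [Nat.succ_add, wpow, wpow, ih, List.append_assoc]

theorem getElem?_wpow (v : List V) {n i : ℕ} (h : i < n * v.length) :
    (wpow v n)[i]? = v[i % v.length]? := by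
  induction n generalizing i with
  | zero => omega
  | succ n ih =>
    rw [wpow, List.getElem?_append]
    by_cases hi : i < v.length
    · rw [if_pos hi, Nat.mod_eq_of_lt hi]
    · rw [if_neg hi, ih (by rw [Nat.add_one_mul] at h; omega),
        ← Nat.mod_eq_sub_mod (Nat.le_of_not_lt hi)]

theorem hasPeriod_wpow (v : List V) (n : ℕ) : HasPeriod (wpow v n) v.length := by
  intro i hi
  rw [length_wpow] at hi
  rw [getElem?_wpow v (by omega), getElem?_wpow v hi, Nat.add_mod_right]

end Wpow

namespace HasPeriod

variable {V : Type*} {w : List V} {p : ℕ}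

theorem of_infix {l : List V} (hl : l <:+: w) (hw : HasPeriod w p) : HasPeriod l p := by
  obtain ⟨k, hk, hlw⟩ := List.infix_iff_getElem?.mp hl
  intro i hi
  rw [List.getElem?_eq_getElem (by omega), List.getElem?_eq_getElem hi, ← hlw, ← hlw,
    hw (i + k) (by omega), Nat.add_right_comm]

theorem getElem?_mod (hw : HasPeriod w p) {i : ℕ} (hi : i < w.length) : w[i]? = w[i % p]? := by
  rcases Nat.eq_zero_or_pos p with rfl | hp
  · rw [Nat.mod_zero]
  induction i using Nat.strong_induction_on with
  | _ i ih =>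
    by_cases h : i < p
    · rw [Nat.mod_eq_of_lt h]
    · have hstep := hw (i - p) (by omega)
      rw [Nat.sub_add_cancel (by omega)] at hstep
      rw [← hstep, ih (i - p) (by omega) (by omega), ← Nat.mod_eq_sub_mod (by omega)]

theorem eq_wpow (hw : HasPeriod w p) {m : ℕ} (hm : w.length = m * p) :
    w = wpow (w.take p) m := by
  rcases Nat.eq_zero_or_pos m with rfl | hm0
  · simpa [wpow] using hm
  have htake : (w.take p).length = p := by
    rw [List.length_take, hm]; exact min_eq_left (Nat.le_mul_of_pos_left p hm0)
  apply List.ext_getElem?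
  intro i
  by_cases hi : i < w.length
  · have hp0 : 0 < p := Nat.pos_of_mul_pos_left (hm ▸ Nat.zero_lt_of_lt hi)
    rw [getElem?_wpow _ (by rw [htake]; omega), htake, hw.getElem?_mod hi, List.getElem?_take,
      if_pos (Nat.mod_lt i hp0)]
  · rw [List.getElem?_eq_none (by omega),
      List.getElem?_eq_none (by rw [length_wpow, htake]; omega)]

theorem append_self (hw : HasPeriod w p) (hp : p ∣ w.length) : HasPeriod (w ++ w) p := by
  obtain ⟨m, hm⟩ := hp
  rcases Nat.eq_zero_or_pos m with rfl | hm0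
  · simp_all [List.eq_nil_of_length_eq_zero hm]
  have hv : (w.take p).length = p := by
    rw [List.length_take, hm]; exact min_eq_left (Nat.le_mul_of_pos_right p hm0)
  rw [hw.eq_wpow (by rw [hm, mul_comm]), ← wpow_add]
  simpa only [hv] using hasPeriod_wpow (w.take p) (m + m)

theorem append_comm {s t : List V} (hst : HasPeriod (s ++ t) p) (hp : p ∣ (s ++ t).length) :
    HasPeriod (t ++ s) p :=
  (hst.append_self hp).of_infix ⟨s, t, by simp⟩

theorem exists_append_singleton (hw : HasPeriod w p) (hp0 : 0 < p) (hp : p ≤ w.length) :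
    ∃ b, HasPeriod (w ++ [b]) p := by
  refine ⟨w[w.length - p], fun i hi => ?_⟩
  rw [List.length_append, List.length_singleton] at hi
  rw [List.getElem?_append_left (by omega)]
  by_cases h : i + p < w.length
  · rw [List.getElem?_append_left h]
    exact hw i h
  · rw [List.getElem?_append_right (by omega), show i + p - w.length = 0 by omega,
      show i = w.length - p by omega]
    simp

end HasPeriod

section Words

variable {V : Type*}

theorem not_primitive_iff_hasPeriod {w : List V} (hw : w ≠ []) :
    ¬ Primitive w ↔ ∃ p, p ∣ w.length ∧ p < w.length ∧ HasPeriod w p := by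
  have hlen : 0 < w.length := List.length_pos_iff.mpr hw
  simp only [Primitive, hw, ne_eq, not_false_eq_true, true_and, not_forall, exists_prop]
  constructor
  · rintro ⟨v, n, rfl, hn⟩
    rw [length_wpow] at hlen ⊢
    have hv : 0 < v.length := Nat.pos_of_mul_pos_left hlen
    have hn2 : 2 ≤ n := by
      have := Nat.pos_of_mul_pos_right hlen
      omega
    exact ⟨v.length, Dvd.intro_left n rfl, by nlinarith, hasPeriod_wpow v n⟩
  · rintro ⟨p, ⟨m, hm⟩, hlt, hp⟩
    refine ⟨w.take p, m, hp.eq_wpow (by rw [hm, mul_comm]), ?_⟩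
    rintro rfl
    omega

theorem exists_rotation_of_infix_append_self {f u : List V} (hf : f <:+: u ++ u)
    (hlen : f.length = u.length) : ∃ x y, u = x ++ y ∧ f = y ++ x := by
  obtain ⟨s, t, hst⟩ := hf
  have hs : s.length ≤ u.length := by
    have := congrArg List.length hst
    simp only [List.length_append] at this
    omega
  obtain ⟨y, rfl⟩ := List.prefix_of_prefix_length_le
    ⟨f ++ t, by rw [← hst, List.append_assoc]⟩ (List.prefix_append u u) hs
  refine ⟨s, y, rfl, List.append_inj_left (t₁ := t) (t₂ := y) ?_ ?_⟩
  · simpa only [List.append_assoc, List.append_cancel_left_eq] using hst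
  · simpa [add_comm] using hlen

theorem HasPeriod.append_swap_of_insert {x y : List V} {a : V} {p : ℕ}
    (h : HasPeriod (x ++ a :: y) p) (hp : p ∣ x.length + y.length + 1) :
    HasPeriod (y ++ x) p := by
  have hrot : HasPeriod (y ++ (x ++ [a])) p :=
    HasPeriod.append_comm (by simpa using h)
      (by rwa [List.length_append, List.length_append, List.length_singleton, Nat.add_right_comm])
  exact hrot.of_infix ⟨[], [a], by simp⟩

theorem exists_insert_hasPeriod_of_append_swap {x y : List V} {p : ℕ}
    (h : HasPeriod (y ++ x) p) (hp : p ∣ x.length + y.length + 1)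
    (hle : p ≤ x.length + y.length) : ∃ a, HasPeriod (x ++ a :: y) p := by
  have hp0 : 0 < p := Nat.pos_of_dvd_of_pos hp (Nat.succ_pos _)
  obtain ⟨a, hext⟩ := h.exists_append_singleton hp0 (by simpa [add_comm] using hle)
  refine ⟨a, ?_⟩
  have hrot := HasPeriod.append_comm (s := y) (by simpa using hext)
    (by rwa [List.length_append, List.length_append, List.length_singleton, ← Nat.add_assoc,
      Nat.add_comm y.length])
  simpa using hrot

end Words

theorem stmt15 {V : Type*} (u : List V) (hu : Primitive u) :
    ¬ InsRobust u ↔ ∃ (f : List V) (p : ℕ),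
      f <:+: (u ++ u) ∧ f.length = u.length ∧ p ∣ u.length + 1 ∧ p ≤ u.length ∧
      HasPeriod f p := by
  constructor
  · intro hnr
    obtain ⟨x, y, a, rfl, hnp⟩ : ∃ x y a, u = x ++ y ∧ ¬ Primitive (x ++ a :: y) := by
      by_contra! h
      exact hnr ⟨hu, h⟩
    obtain ⟨p, hdvd, hlt, hper⟩ := (not_primitive_iff_hasPeriod (by simp)).mp hnp
    simp only [List.length_append, List.length_cons, ← Nat.add_assoc] at hdvd hlt ⊢
    exact ⟨y ++ x, p, ⟨x, y, by simp⟩, by simp [Nat.add_comm], hdvd, by omega,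
      hper.append_swap_of_insert hdvd⟩
  · rintro ⟨f, p, hf, hlen, hdvd, hle, hper⟩ hr
    obtain ⟨x, y, rfl, rfl⟩ := exists_rotation_of_infix_append_self hf hlen
    rw [List.length_append] at hdvd hle
    obtain ⟨a, ha⟩ := exists_insert_hasPeriod_of_append_swap hper hdvd hle
    refine (not_primitive_iff_hasPeriod (by simp)).mpr ⟨p, ?_, ?_, ha⟩ (hr.2 x y a rfl) <;>
      simp only [List.length_append, List.length_cons, ← Nat.add_assoc]
    · exact hdvd
    · omega
end
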